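/- For every real number C ≥ 1, every ε > 0, and every integer m ≥ 3, there exists a smooth map f : ℝ² → ℝ^m such that M = graph f is an entire spacelike stationary graph in ℝ₁^{2+m} whose W-function satisfies (inf_{ℝ²} W)·(sup_{ℝ²} W) = C and 0 < sup_{ℝ²} W − inf_{ℝ²} W < ε. In particular, for C > 1 this gives non-flat entire spacelike stationary graphs with W ≥ 1 everywhere. -/

import Mathlib

open Matrix MeasureTheory Filter

noncomputable section

/-- Partial derivative `∂F/∂x_i` of a function on `ℝ²`. -/
def pd (F : (Fin 2 → ℝ) → ℝ) (i : Fin 2) (x : Fin 2 → ℝ) : ℝ :=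
  fderiv ℝ F x (Pi.single i 1)

/-- Induced metric matrix of `graph f ⊂ ℝ₁^{2+m}`:
`g_{ij} = δ_{ij} + Σ_{α<m-1} ∂f_α/∂x_i ∂f_α/∂x_j − ∂f_{m}/∂x_i ∂f_{m}/∂x_j`
(the last coordinate is the timelike one). -/
def gMat {m : ℕ} (f : (Fin 2 → ℝ) → (Fin m → ℝ)) (x : Fin 2 → ℝ) :
    Matrix (Fin 2) (Fin 2) ℝ :=
  Matrix.of fun i j => (if i = j then (1:ℝ) else 0)
    + ∑ α : Fin m, (if (α : ℕ) = m - 1 then (-1:ℝ) else 1)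
        * pd (fun y => f y α) i x * pd (fun y => f y α) j x

/-- The W-function `W = √(det g)`. -/
def Wf {m : ℕ} (f : (Fin 2 → ℝ) → (Fin m → ℝ)) (x : Fin 2 → ℝ) : ℝ :=
  Real.sqrt ((gMat f x).det)

/-- The graph of `f` is an entire spacelike graph: `g` is positive definite everywhere. -/
def Spacelike {m : ℕ} (f : (Fin 2 → ℝ) → (Fin m → ℝ)) : Prop :=
  ∀ x, (gMat f x).PosDef

/-- The graph of `f` is stationary (vanishing mean curvature):
`Σ_i ∂_i(W g^{ij}) = 0` and `Σ_{i,j} ∂_i(W g^{ij} ∂f_α/∂x_j) = 0`. -/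
def Stationary {m : ℕ} (f : (Fin 2 → ℝ) → (Fin m → ℝ)) : Prop :=
  (∀ x, ∀ j : Fin 2,
     ∑ i : Fin 2, pd (fun y => Wf f y * (gMat f y)⁻¹ i j) i x = 0) ∧
  (∀ x, ∀ α : Fin m,
     ∑ i : Fin 2, pd (fun y => ∑ j : Fin 2,
        Wf f y * (gMat f y)⁻¹ i j * pd (fun z => f z α) j y) i x = 0)

/-- `f` is affine linear. -/
def AffineLinear {m : ℕ} (f : (Fin 2 → ℝ) → (Fin m → ℝ)) : Prop :=
  ∃ (L : (Fin 2 → ℝ) →ₗ[ℝ] (Fin m → ℝ)) (c : Fin m → ℝ), ∀ x, f x = L x + c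

/-- A real-valued function on `ℝ²` is affine linear. -/
def AffineLinR (h : (Fin 2 → ℝ) → ℝ) : Prop :=
  ∃ (L : (Fin 2 → ℝ) →ₗ[ℝ] ℝ) (c : ℝ), ∀ x, h x = L x + c

/-- `h : ℝ² → ℝ` is harmonic: smooth with `∂²h/∂x₁² + ∂²h/∂x₂² = 0`. -/
def HarmonicR (h : (Fin 2 → ℝ) → ℝ) : Prop :=
  ContDiff ℝ (⊤ : ℕ∞) h ∧
  ∀ x, pd (fun y => pd h 0 y) 0 x + pd (fun y => pd h 1 y) 1 x = 0

/-- `y` is a lightlike vector of `ℝ₁^m`: `y₁² + ⋯ + y_{m-1}² − y_m² = 0`. -/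
def Lightlike {m : ℕ} (y : Fin m → ℝ) : Prop :=
  ∑ α : Fin m, (if (α : ℕ) = m - 1 then (-1:ℝ) else 1) * y α * y α = 0

/-- `f = h·y₀ + y₁` with `h` a nonlinear harmonic function, `y₀` a nonzero lightlike
vector and `y₁` a constant vector. -/
def LightlikeForm {m : ℕ} (f : (Fin 2 → ℝ) → (Fin m → ℝ)) : Prop :=
  ∃ (h : (Fin 2 → ℝ) → ℝ) (y₀ y₁ : Fin m → ℝ),
    HarmonicR h ∧ ¬ AffineLinR h ∧ Lightlike y₀ ∧ y₀ ≠ 0 ∧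
    ∀ x, f x = fun α => h x * y₀ α + y₁ α

/-- The linear change of variables `x₁ = u₁, x₂ = a·u₁ + b·u₂`. -/
def Tmap (a b : ℝ) (u : Fin 2 → ℝ) : Fin 2 → ℝ := ![u 0, a * u 0 + b * u 1]

/-- Jacobian matrix of `Tmap a b`. -/
def Amat (a b : ℝ) : Matrix (Fin 2) (Fin 2) ℝ := !![1, 0; a, b]

/-!
Take `f = (c x₁, r cosh x₁ cos (x₂/b), 0, …, 0, r sinh x₁ cos (x₂/b))` with `1 + c² = b² + r²`.
Since `cosh² − sinh² = 1`, the induced metric is `g = λ · diag(1, b⁻²)` with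
`λ = b² + r² sin² (x₂/b)`. On a surface `√(det g) g⁻¹` is invariant under conformal changes, so
`W g⁻¹ = diag(b⁻¹, b)` is constant; the stationarity equations reduce to
`b⁻¹ ∂₁² f_α + b ∂₂² f_α = 0`, which every component satisfies. Finally `W = λ / b` ranges over
`[b, b + r²/b]`, so `inf W · sup W = b² + r²` and `sup W − inf W = r²/b`, and `b, r` can be chosen to
make these `C` and as small as wanted.
-/

section PartialDerivatives

lemma pd_const (k : ℝ) (i : Fin 2) : pd (fun _ => k) i = fun _ => 0 := by
  ext x
  simp [pd]

lemma pd_const_mul (a : ℝ) (F : (Fin 2 → ℝ) → ℝ) (i : Fin 2) (x : Fin 2 → ℝ) :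
    pd (fun y => a * F y) i x = a * pd F i x := by
  simp only [pd, ← smul_eq_mul, ← Pi.smul_def, fderiv_const_smul_field]
  rfl

def sep (u v : ℝ → ℝ) (y : Fin 2 → ℝ) : ℝ := u (y 0) * v (y 1)

variable {u v u' v' : ℝ → ℝ}

lemma hasFDerivAt_sep (hu : ∀ t, HasDerivAt u (u' t) t) (hv : ∀ t, HasDerivAt v (v' t) t)
    (x : Fin 2 → ℝ) :
    HasFDerivAt (sep u v)
      (u (x 0) • v' (x 1) • ContinuousLinearMap.proj (R := ℝ) (φ := fun _ : Fin 2 => ℝ) 1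
        + v (x 1) • u' (x 0) • ContinuousLinearMap.proj (R := ℝ) (φ := fun _ : Fin 2 => ℝ) 0) x :=
  ((hu (x 0)).comp_hasFDerivAt x (hasFDerivAt_apply 0 x)).mul
    ((hv (x 1)).comp_hasFDerivAt x (hasFDerivAt_apply 1 x))

lemma pd_sep_zero (hu : ∀ t, HasDerivAt u (u' t) t) (hv : ∀ t, HasDerivAt v (v' t) t) :
    pd (sep u v) 0 = sep u' v := by
  ext x
  simp only [pd, (hasFDerivAt_sep hu hv x).fderiv, _root_.add_apply, _root_.smul_apply,
    ContinuousLinearMap.proj_apply, Pi.single_eq_same, Pi.single_eq_of_ne one_ne_zero, sep,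
    smul_eq_mul]
  ring

lemma pd_sep_one (hu : ∀ t, HasDerivAt u (u' t) t) (hv : ∀ t, HasDerivAt v (v' t) t) :
    pd (sep u v) 1 = sep u v' := by
  ext x
  simp [pd, (hasFDerivAt_sep hu hv x).fderiv, sep]

lemma weighted_laplacian_sep {u'' v'' : ℝ → ℝ} (hu : ∀ t, HasDerivAt u (u' t) t)
    (hu' : ∀ t, HasDerivAt u' (u'' t) t) (hv : ∀ t, HasDerivAt v (v' t) t)
    (hv' : ∀ t, HasDerivAt v' (v'' t) t) (p q : ℝ) (x : Fin 2 → ℝ) :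
    p * pd (pd (sep u v) 0) 0 x + q * pd (pd (sep u v) 1) 1 x
      = p * u'' (x 0) * v (x 1) + q * u (x 0) * v'' (x 1) := by
  rw [pd_sep_zero hu hv, pd_sep_zero hu' hv, pd_sep_one hu hv, pd_sep_one hu hv', sep, sep]
  ring

lemma contDiff_sep {k : WithTop ℕ∞} (hu : ContDiff ℝ k u) (hv : ContDiff ℝ k v) :
    ContDiff ℝ k (sep u v) :=
  (hu.comp (contDiff_apply ℝ ℝ 0)).mul (hv.comp (contDiff_apply ℝ ℝ 1))

end PartialDerivatives

section Stationarity

variable {m : ℕ} {f : (Fin 2 → ℝ) → (Fin m → ℝ)}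

lemma stationary_of_mul_inv_eq_diagonal {p q : ℝ}
    (hW : ∀ x, Wf f x • (gMat f x)⁻¹ = diagonal ![p, q])
    (hf : ∀ α x, p * pd (pd (fun y => f y α) 0) 0 x + q * pd (pd (fun y => f y α) 1) 1 x = 0) :
    Stationary f := by
  have hentry : ∀ y i j, Wf f y * (gMat f y)⁻¹ i j = diagonal ![p, q] i j := by
    intro y i j
    rw [← hW y, Matrix.smul_apply, smul_eq_mul]
  refine ⟨fun x j => by simp [hentry, pd_const], fun x α => ?_⟩
  simpa [hentry, pd_const_mul] using hf α x

end Stationarity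

lemma sqrt_det_smul_inv_smul {a : ℝ} (ha : 0 < a) (G : Matrix (Fin 2) (Fin 2) ℝ) :
    √(a • G).det • (a • G)⁻¹ = √G.det • G⁻¹ := by
  rw [det_smul, Fintype.card_fin, Real.sqrt_mul (by positivity), Real.sqrt_sq ha.le]
  by_cases hG : IsUnit G.det
  · have hinv : (a • G)⁻¹ = a⁻¹ • G⁻¹ :=
      inv_eq_left_inv (by simp [smul_smul, ha.ne', G.nonsing_inv_mul hG])
    rw [hinv, smul_smul]
    field_simp
  · rw [isUnit_iff_ne_zero, not_not] at hG
    simp [hG]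

section MinkowskiThreeSpace

variable {n : ℕ}

/-- `(p, q, s) ∈ ℝ₁³` placed in the first, second and last coordinates of `ℝ₁^{n+3}`, so that the
timelike coordinates match. -/
def embed3 (n : ℕ) (p q s : ℝ) : Fin (n + 3) → ℝ :=
  Fin.cons p (Fin.cons q (Fin.snoc (0 : Fin n → ℝ) s))

lemma embed3_apply_cases (α : Fin (n + 3)) :
    (∀ p q s, embed3 n p q s α = p) ∨ (∀ p q s, embed3 n p q s α = q) ∨
      (∀ p q s, embed3 n p q s α = s) ∨ (∀ p q s, embed3 n p q s α = 0) := by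
  induction α using Fin.cases with
  | zero => simp [embed3]
  | succ β =>
    induction β using Fin.cases with
    | zero => simp [embed3]
    | succ γ =>
      induction γ using Fin.lastCases with
      | last => simp [embed3]
      | cast k => simp [embed3]

lemma embed3_component_of {X : Type*} (P : (X → ℝ) → Prop) {F₀ F₁ F₂ : X → ℝ}
    (h₀ : P F₀) (h₁ : P F₁) (h₂ : P F₂) (hzero : P fun _ => 0) (α : Fin (n + 3)) :
    P fun y => embed3 n (F₀ y) (F₁ y) (F₂ y) α := by
  rcases embed3_apply_cases α with h | h | h | h <;> simpa only [h]

lemma lorentz_sum_embed3 (p q s p' q' s' : ℝ) :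
    ∑ α : Fin (n + 3), (if (α : ℕ) = n + 3 - 1 then (-1 : ℝ) else 1)
      * embed3 n p q s α * embed3 n p' q' s' α = p * p' + q * q' - s * s' := by
  rw [Fin.sum_univ_succ, Fin.sum_univ_succ, Fin.sum_univ_castSucc]
  simp [embed3, sub_eq_add_neg, add_assoc]

lemma pd_embed3 (F₀ F₁ F₂ : (Fin 2 → ℝ) → ℝ) (α : Fin (n + 3)) (i : Fin 2) (x : Fin 2 → ℝ) :
    pd (fun y => embed3 n (F₀ y) (F₁ y) (F₂ y) α) i x
      = embed3 n (pd F₀ i x) (pd F₁ i x) (pd F₂ i x) α := by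
  rcases embed3_apply_cases α with h | h | h | h <;> simp only [h, pd_const]

lemma gMat_embed3 (F₀ F₁ F₂ : (Fin 2 → ℝ) → ℝ) (x : Fin 2 → ℝ) :
    gMat (fun y => embed3 n (F₀ y) (F₁ y) (F₂ y)) x = of fun i j => (if i = j then 1 else 0)
      + (pd F₀ i x * pd F₀ j x + pd F₁ i x * pd F₁ j x - pd F₂ i x * pd F₂ j x) := by
  ext i j
  simp only [gMat, of_apply, pd_embed3, lorentz_sum_embed3]

end MinkowskiThreeSpace

section Example

open Real

variable (n : ℕ) {b c r : ℝ}

def exampleMap (n : ℕ) (b c r : ℝ) : (Fin 2 → ℝ) → Fin (n + 3) → ℝ := fun y =>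
  embed3 n (sep (c * ·) (fun _ => 1) y) (sep (r * cosh ·) (fun t => cos (t / b)) y)
    (sep (r * sinh ·) (fun t => cos (t / b)) y)

lemma hasDerivAt_const_mul_cosh (r t : ℝ) :
    HasDerivAt (r * cosh ·) (r * sinh t) t :=
  (hasDerivAt_cosh t).const_mul r

lemma hasDerivAt_const_mul_sinh (r t : ℝ) :
    HasDerivAt (r * sinh ·) (r * cosh t) t :=
  (hasDerivAt_sinh t).const_mul r

lemma hasDerivAt_cos_div (b t : ℝ) :
    HasDerivAt (fun t => cos (t / b)) (-b⁻¹ * sin (t / b)) t :=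
  ((hasDerivAt_id t).div_const b).cos.congr_deriv (by simp only [id_eq]; ring)

lemma hasDerivAt_neg_inv_mul_sin_div (b t : ℝ) :
    HasDerivAt (fun t => -b⁻¹ * sin (t / b)) (-(b ^ 2)⁻¹ * cos (t / b)) t :=
  (((hasDerivAt_id t).div_const b).sin.const_mul (-b⁻¹)).congr_deriv (by simp only [id_eq]; ring)

lemma gMat_exampleMap (hb : b ≠ 0) (hrel : 1 + c ^ 2 = b ^ 2 + r ^ 2) (x : Fin 2 → ℝ) :
    gMat (exampleMap n b c r) x
      = (b ^ 2 + r ^ 2 * sin (x 1 / b) ^ 2) • diagonal ![1, (b ^ 2)⁻¹] := by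
  have hlin (t : ℝ) : HasDerivAt (c * ·) c t := hasDerivAt_const_mul c
  unfold exampleMap
  rw [gMat_embed3]
  ext i j
  fin_cases i <;> fin_cases j <;>
    simp only [of_apply, Matrix.smul_apply, smul_eq_mul, diagonal_apply, cons_val_zero,
      cons_val_one, cons_val_fin_one, Fin.zero_eta, Fin.mk_one, Fin.isValue, zero_ne_one,
      one_ne_zero, if_true, if_false, sep, pd_sep_zero hlin (fun t => hasDerivAt_const t 1),
      pd_sep_one hlin (fun t => hasDerivAt_const t 1),
      pd_sep_zero (hasDerivAt_const_mul_cosh r) (hasDerivAt_cos_div b),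
      pd_sep_one (hasDerivAt_const_mul_cosh r) (hasDerivAt_cos_div b),
      pd_sep_zero (hasDerivAt_const_mul_sinh r) (hasDerivAt_cos_div b),
      pd_sep_one (hasDerivAt_const_mul_sinh r) (hasDerivAt_cos_div b)]
  · linear_combination hrel - r ^ 2 * sin_sq_add_cos_sq (x 1 / b)
      - r ^ 2 * cos (x 1 / b) ^ 2 * cosh_sq_sub_sinh_sq (x 0)
  · ring
  · ring
  · field_simp
    linear_combination r ^ 2 * sin (x 1 / b) ^ 2 * cosh_sq_sub_sinh_sq (x 0)

lemma spacelike_exampleMap (hb : 0 < b) (hrel : 1 + c ^ 2 = b ^ 2 + r ^ 2) :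
    Spacelike (exampleMap n b c r) := fun x => by
  rw [gMat_exampleMap n hb.ne' hrel]
  exact (posDef_diagonal_iff.mpr (by simp [Fin.forall_fin_two, hb])).smul (by positivity)

lemma Wf_exampleMap (hb : 0 < b) (hrel : 1 + c ^ 2 = b ^ 2 + r ^ 2) (x : Fin 2 → ℝ) :
    Wf (exampleMap n b c r) x = b + r ^ 2 / b * sin (x 1 / b) ^ 2 := by
  have hconf : 0 ≤ b ^ 2 + r ^ 2 * sin (x 1 / b) ^ 2 := by positivity
  rw [Wf, gMat_exampleMap n hb.ne' hrel, det_smul, det_diagonal]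
  simp only [Fintype.card_fin, Fin.prod_univ_two, Matrix.cons_val_zero, Matrix.cons_val_one,
    one_mul]
  rw [Real.sqrt_mul (by positivity), Real.sqrt_sq hconf, Real.sqrt_inv, Real.sqrt_sq hb.le]
  field_simp

lemma Wf_smul_inv_exampleMap (hb : 0 < b) (hrel : 1 + c ^ 2 = b ^ 2 + r ^ 2) (x : Fin 2 → ℝ) :
    Wf (exampleMap n b c r) x • (gMat (exampleMap n b c r) x)⁻¹ = diagonal ![b⁻¹, b] := by
  have hinv : (diagonal ![1, (b ^ 2)⁻¹])⁻¹ = diagonal ![1, b ^ 2] := by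
    refine inv_eq_left_inv ?_
    rw [diagonal_mul_diagonal, ← diagonal_one]
    congr 1
    ext i
    fin_cases i <;> simp [hb.ne']
  rw [Wf, gMat_exampleMap n hb.ne' hrel, sqrt_det_smul_inv_smul (by positivity), det_diagonal,
    hinv]
  ext i j
  fin_cases i <;> fin_cases j <;> simp only [Fin.prod_univ_two, cons_val_zero,
    cons_val_one, cons_val_fin_one, one_mul, Real.sqrt_inv, Real.sqrt_sq hb.le, Matrix.smul_apply,
    diagonal_apply, Fin.zero_eta, Fin.mk_one, Fin.isValue, zero_ne_one, one_ne_zero, if_true,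
    if_false, smul_eq_mul, mul_zero, mul_one]
  field_simp

lemma stationary_exampleMap (hb : 0 < b) (hrel : 1 + c ^ 2 = b ^ 2 + r ^ 2) :
    Stationary (exampleMap n b c r) := by
  refine stationary_of_mul_inv_eq_diagonal (Wf_smul_inv_exampleMap n hb hrel) fun α => ?_
  refine embed3_component_of (fun φ => ∀ x, b⁻¹ * pd (pd φ 0) 0 x + b * pd (pd φ 1) 1 x = 0)
    (fun x => ?_) (fun x => ?_) (fun x => ?_) (fun x => by simp [pd_const]) α
  · rw [weighted_laplacian_sep (fun t => hasDerivAt_const_mul c) (fun t => hasDerivAt_const t c) (fun t => hasDerivAt_const t 1)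
      (fun t => hasDerivAt_const t 0)]
    simp
  · rw [weighted_laplacian_sep (hasDerivAt_const_mul_cosh r) (hasDerivAt_const_mul_sinh r)
      (hasDerivAt_cos_div b) (hasDerivAt_neg_inv_mul_sin_div b)]
    field_simp
    ring
  · rw [weighted_laplacian_sep (hasDerivAt_const_mul_sinh r) (hasDerivAt_const_mul_cosh r)
      (hasDerivAt_cos_div b) (hasDerivAt_neg_inv_mul_sin_div b)]
    field_simp
    ring

lemma contDiff_exampleMap : ContDiff ℝ (⊤ : ℕ∞) (exampleMap n b c r) := by
  have hcos : ContDiff ℝ (⊤ : ℕ∞) fun t => cos (t / b) := contDiff_cos.comp (contDiff_id.div_const b)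
  refine contDiff_pi.2 fun α => embed3_component_of (ContDiff ℝ (⊤ : ℕ∞)) ?_ ?_ ?_ contDiff_const α
  · exact contDiff_sep (contDiff_const.mul contDiff_id) contDiff_const
  · exact contDiff_sep (contDiff_const.mul contDiff_cosh) hcos
  · exact contDiff_sep (contDiff_const.mul contDiff_sinh) hcos

lemma iInf_Wf_exampleMap (hb : 0 < b) (hrel : 1 + c ^ 2 = b ^ 2 + r ^ 2) :
    ⨅ x, Wf (exampleMap n b c r) x = b := by
  simp only [Wf_exampleMap n hb hrel]
  refine IsLeast.csInf_eq ⟨⟨0, by simp⟩, ?_⟩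
  rintro _ ⟨x, rfl⟩
  exact le_add_of_nonneg_right (by positivity)

lemma iSup_Wf_exampleMap (hb : 0 < b) (hrel : 1 + c ^ 2 = b ^ 2 + r ^ 2) :
    ⨆ x, Wf (exampleMap n b c r) x = b + r ^ 2 / b := by
  simp only [Wf_exampleMap n hb hrel]
  refine IsGreatest.csSup_eq ⟨⟨fun _ => b * (π / 2), by simp [hb.ne']⟩, ?_⟩
  rintro _ ⟨x, rfl⟩
  have hsin := sin_sq_le_one (x 1 / b)
  have hcoef : 0 ≤ r ^ 2 / b := by positivity
  simp only
  nlinarith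

end Example

lemma exists_example_params {C ε : ℝ} (hC : 1 ≤ C) (hε : 0 < ε) :
    ∃ b c r : ℝ, 0 < b ∧ 1 + c ^ 2 = b ^ 2 + r ^ 2 ∧ b ^ 2 + r ^ 2 = C ∧
      0 < r ^ 2 / b ∧ r ^ 2 / b < ε := by
  set s := min (1 / 2) (ε / 4)
  have hs : 0 < s := lt_min (by norm_num) (by positivity)
  have hs_half : s ≤ 1 / 2 := min_le_left _ _
  have hs_ε : s ≤ ε / 4 := min_le_right _ _
  have hb2 : √(C - s) ^ 2 = C - s := Real.sq_sqrt (by linarith)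
  have hc2 : √(C - 1) ^ 2 = C - 1 := Real.sq_sqrt (by linarith)
  have hr2 : √s ^ 2 = s := Real.sq_sqrt hs.le
  have hb : 1 / 2 ≤ √(C - s) := by nlinarith [Real.sqrt_nonneg (C - s)]
  refine ⟨√(C - s), √(C - 1), √s, by linarith, by linarith, by linarith, by positivity, ?_⟩
  rw [hr2, div_lt_iff₀ (by linarith)]
  nlinarith

/-- for every `C ≥ 1`, `ε > 0` and `m ≥ 3` there is an entire spacelike
stationary graph in `ℝ₁^{2+m}` with `(inf W)·(sup W) = C` and
`0 < sup W − inf W < ε`. -/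
theorem stmt8 (C : ℝ) (hC : 1 ≤ C) (ε : ℝ) (hε : 0 < ε) (m : ℕ) (hm : 3 ≤ m) :
    ∃ f : (Fin 2 → ℝ) → (Fin m → ℝ),
      ContDiff ℝ (⊤ : ℕ∞) f ∧ Spacelike f ∧ Stationary f ∧
      (⨅ x, Wf f x) * (⨆ x, Wf f x) = C ∧
      0 < (⨆ x, Wf f x) - (⨅ x, Wf f x) ∧
      (⨆ x, Wf f x) - (⨅ x, Wf f x) < ε := by
  obtain ⟨n, rfl⟩ := Nat.exists_eq_add_of_le' hm
  obtain ⟨b, c, r, hb, hrel, hC, hpos, hlt⟩ := exists_example_params hC hε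
  refine ⟨exampleMap n b c r, contDiff_exampleMap n, spacelike_exampleMap n hb hrel,
    stationary_exampleMap n hb hrel, ?_⟩
  rw [iInf_Wf_exampleMap n hb hrel, iSup_Wf_exampleMap n hb hrel, add_sub_cancel_left]
  refine ⟨?_, hpos, hlt⟩
  rw [← hC]
  field_simp
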